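/- Let (x_j)_{j∈J} be a finite frame for ℝ^n, let x∈ℝ^n, λ>0 and C>0. Then the following are equivalent: (1) there exists an open set U containing x such that ‖y−z‖ ≤ C (Σ_{j∈J} (φ_λ(⟨y,x_j⟩) − φ_λ(⟨z,x_j⟩))²)^{1/2} for all y,z∈U (i.e., (x_j)_{j∈J} does C-stable λ-saturation recovery on an open set containing x); (2) the subfamily (x_j)_{j∈J_λ^♯(x)}, with J_λ^♯(x)={j∈J : |⟨x,x_j⟩|<λ}, satisfies C^{−2}‖y‖² ≤ Σ_{j∈J_λ^♯(x)} ⟨y,x_j⟩² for all y∈ℝ^n (i.e., it is a frame of ℝ^n with lower frame bound C^{−2}). -/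

import Mathlib

/-!
On the open set where `|⟪·, x_j⟫| < λ` for every `j` with `|⟪x, x_j⟫| < λ`, those saturated
measurements are the linear measurements themselves, so a lower frame bound of that subfamily
gives stability there. Conversely, moving from `x` to `(1 + t) x` pushes every index with
`|⟪x, x_j⟫| ≥ λ` strictly into saturation, where a further perturbation of size `t²` is invisible;
comparing `(1 + t) x` with `(1 + t) x + t² y` then forces the lower frame bound in direction `y`.
-/

local notation "⟪" x ", " y "⟫" => @inner ℝ _ _ x y

/-- The saturation function `φ_λ`: `φ_λ(t) = t` if `|t| ≤ λ` and `φ_λ(t) = sign(t)·λ` else. -/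
noncomputable def satur (l t : ℝ) : ℝ := max (-l) (min l t)

open Filter Topology

lemma satur_eq_self {l t : ℝ} (h : |t| ≤ l) : satur l t = t := by
  obtain ⟨h₁, h₂⟩ := abs_le.mp h
  rw [satur, min_eq_right h₂, max_eq_right h₁]

lemma abs_satur_sub_satur_le (l a b : ℝ) : |satur l a - satur l b| ≤ |a - b| := by
  refine (abs_max_sub_max_le_max _ _ _ _).trans ?_
  simpa using abs_min_sub_min_le_max l a l b

lemma satur_eq_of_abs_sub_le {l a b : ℝ} (hl : 0 ≤ l) (ha : l ≤ |a|) (hb : |b - a| ≤ |a| - l) :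
    satur l b = satur l a := by
  rw [abs_le] at hb
  rcases le_total 0 a with h | h
  · rw [abs_of_nonneg h] at ha hb
    simp only [satur, min_def, max_def]
    split_ifs <;> linarith
  · rw [abs_of_nonpos h] at ha hb
    simp only [satur, min_def, max_def]
    split_ifs <;> linarith

lemma le_mul_sqrt_iff_inv_sq_mul_sq_le {a C T : ℝ} (ha : 0 ≤ a) (hC : 0 < C) (hT : 0 ≤ T) :
    a ≤ C * √T ↔ C⁻¹ ^ 2 * a ^ 2 ≤ T := by
  rw [← inv_mul_le_iff₀ hC, Real.le_sqrt (by positivity) hT, mul_pow]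

lemma isOpen_setOf_forall_abs_inner_lt {E J : Type*} [NormedAddCommGroup E]
    [InnerProductSpace ℝ E] (l : ℝ) (v : J → E) (S : Finset J) :
    IsOpen {w : E | ∀ j ∈ S, |⟪w, v j⟫| < l} := by
  simp only [Set.ofPred_forall]
  exact isOpen_biInter_finset fun j _ => isOpen_lt (by fun_prop) continuous_const

section

variable {E J : Type*} [NormedAddCommGroup E] [InnerProductSpace ℝ E] [Fintype J]

noncomputable def unsaturatedIndices (l : ℝ) (v : J → E) (x : E) : Finset J :=
  Finset.univ.filter fun j => |⟪x, v j⟫| < l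

def StableSaturationRecovery (v : J → E) (l C : ℝ) (X : Set E) : Prop :=
  ∀ y ∈ X, ∀ z ∈ X, ‖y - z‖ ≤ C * √(∑ j, (satur l ⟪y, v j⟫ - satur l ⟪z, v j⟫) ^ 2)

def HasLowerFrameBound (v : J → E) (S : Finset J) (A : ℝ) : Prop :=
  ∀ y, A * ‖y‖ ^ 2 ≤ ∑ j ∈ S, ⟪y, v j⟫ ^ 2

lemma sum_sq_satur_sub_le {l : ℝ} {v : J → E} {S : Finset J} {p q : E}
    (hsat : ∀ j ∉ S, satur l ⟪p, v j⟫ = satur l ⟪q, v j⟫) :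
    ∑ j, (satur l ⟪p, v j⟫ - satur l ⟪q, v j⟫) ^ 2 ≤ ∑ j ∈ S, ⟪p - q, v j⟫ ^ 2 := by
  rw [← Finset.sum_subset S.subset_univ fun j _ hj => by rw [hsat j hj, sub_self, sq, mul_zero]]
  refine Finset.sum_le_sum fun j _ => ?_
  rw [inner_sub_left]
  exact sq_le_sq.mpr (abs_satur_sub_satur_le _ _ _)

lemma sum_sq_inner_sub_le_sum_sq_satur_sub {l : ℝ} {v : J → E} {S : Finset J} {y z : E}
    (hy : ∀ j ∈ S, |⟪y, v j⟫| ≤ l) (hz : ∀ j ∈ S, |⟪z, v j⟫| ≤ l) :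
    ∑ j ∈ S, ⟪y - z, v j⟫ ^ 2 ≤ ∑ j, (satur l ⟪y, v j⟫ - satur l ⟪z, v j⟫) ^ 2 :=
  calc ∑ j ∈ S, ⟪y - z, v j⟫ ^ 2
      = ∑ j ∈ S, (satur l ⟪y, v j⟫ - satur l ⟪z, v j⟫) ^ 2 :=
        Finset.sum_congr rfl fun j hj => by
          rw [inner_sub_left, satur_eq_self (hy j hj), satur_eq_self (hz j hj)]
    _ ≤ _ := Finset.sum_le_sum_of_subset_of_nonneg S.subset_univ fun _ _ _ => sq_nonneg _

lemma StableSaturationRecovery.of_hasLowerFrameBound {v : J → E} {l C : ℝ} {S : Finset J}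
    {X : Set E} (hC : 0 < C) (hS : HasLowerFrameBound v S (C⁻¹ ^ 2))
    (hX : ∀ w ∈ X, ∀ j ∈ S, |⟪w, v j⟫| ≤ l) : StableSaturationRecovery v l C X :=
  fun y hy z hz =>
    (le_mul_sqrt_iff_inv_sq_mul_sq_le (norm_nonneg _) hC
      (Finset.sum_nonneg fun _ _ => sq_nonneg _)).2 <|
      (hS (y - z)).trans (sum_sq_inner_sub_le_sum_sq_satur_sub (hX y hy) (hX z hz))

lemma eventually_satur_inner_eq {l : ℝ} (hl : 0 < l) (y : E) {x v : E} (hx : l ≤ |⟪x, v⟫|) :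
    ∀ᶠ t in 𝓝[>] (0 : ℝ), satur l ⟪x + t • x + t ^ 2 • y, v⟫ = satur l ⟪x + t • x, v⟫ := by
  have hsmall : ∀ᶠ t in 𝓝 (0 : ℝ), t * |⟪y, v⟫| < l :=
    ((continuous_id.mul continuous_const).tendsto' 0 0 (by simp)).eventually_lt_const hl
  filter_upwards [nhdsWithin_le_nhds hsmall, self_mem_nhdsWithin] with t ht (ht0 : 0 < t)
  have hxt : |⟪x + t • x, v⟫| = (1 + t) * |⟪x, v⟫| := by
    rw [inner_add_left, real_inner_smul_left, ← one_add_mul, abs_mul, abs_of_pos (by linarith)]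
  refine satur_eq_of_abs_sub_le hl.le (by nlinarith) ?_
  rw [← inner_sub_left, add_sub_cancel_left, real_inner_smul_left, abs_mul,
    abs_of_nonneg (by positivity), hxt]
  nlinarith

lemma HasLowerFrameBound.of_stableSaturationRecovery {v : J → E} {l C : ℝ} {x : E} {U : Set E}
    (hl : 0 < l) (hC : 0 < C) (hU : U ∈ 𝓝 x) (hrec : StableSaturationRecovery v l C U) :
    HasLowerFrameBound v (unsaturatedIndices l v x) (C⁻¹ ^ 2) := by
  intro y
  have hp : ∀ᶠ t in 𝓝[>] (0 : ℝ), x + t • x ∈ U := nhdsWithin_le_nhds <|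
    ((by fun_prop : Continuous fun t : ℝ => x + t • x).tendsto' 0 x (by simp)).eventually hU
  have hq : ∀ᶠ t in 𝓝[>] (0 : ℝ), x + t • x + t ^ 2 • y ∈ U := nhdsWithin_le_nhds <|
    ((by fun_prop : Continuous fun t : ℝ => x + t • x + t ^ 2 • y).tendsto' 0 x
      (by simp)).eventually hU
  have hsat : ∀ᶠ t in 𝓝[>] (0 : ℝ), ∀ j ∉ unsaturatedIndices l v x,
      satur l ⟪x + t • x + t ^ 2 • y, v j⟫ = satur l ⟪x + t • x, v j⟫ :=
    eventually_all.2 fun j => eventually_imp_distrib_left.2 fun hj =>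
      eventually_satur_inner_eq hl y
        (not_lt.1 fun h => hj (Finset.mem_filter.2 ⟨Finset.mem_univ _, h⟩))
  obtain ⟨t, hp, hq, hsat, ht⟩ := (hp.and (hq.and (hsat.and self_mem_nhdsWithin))).exists
  have key := ((le_mul_sqrt_iff_inv_sq_mul_sq_le (norm_nonneg _) hC
    (Finset.sum_nonneg fun _ _ => sq_nonneg _)).1 (hrec _ hq _ hp)).trans
    (sum_sq_satur_sub_le hsat)
  simp only [add_sub_cancel_left, norm_smul, real_inner_smul_left, mul_pow, ← Finset.mul_sum,
    Real.norm_of_nonneg (sq_nonneg t), mul_left_comm (C⁻¹ ^ 2)] at key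
  exact le_of_mul_le_mul_left key (by positivity)

end

theorem local_stable_recovery_iff_lower_frame_bound_general
    {n : ℕ} {J : Type*} [Fintype J] (xv : J → EuclideanSpace ℝ (Fin n))
    (x : EuclideanSpace ℝ (Fin n)) (lam C : ℝ) (hlam : 0 < lam) (hC : 0 < C) :
    (∃ U : Set (EuclideanSpace ℝ (Fin n)), IsOpen U ∧ x ∈ U ∧
        ∀ y ∈ U, ∀ z ∈ U,
          ‖y - z‖ ≤ C * Real.sqrt (∑ j, (satur lam ⟪y, xv j⟫ - satur lam ⟪z, xv j⟫) ^ 2)) ↔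
      ∀ y : EuclideanSpace ℝ (Fin n),
        C⁻¹ ^ 2 * ‖y‖ ^ 2 ≤
          ∑ j ∈ Finset.univ.filter (fun j : J => |⟪x, xv j⟫| < lam), ⟪y, xv j⟫ ^ 2 := by
  constructor
  · rintro ⟨U, hU, hxU, hrec⟩
    exact HasLowerFrameBound.of_stableSaturationRecovery hlam hC (hU.mem_nhds hxU) hrec
  · intro h
    refine ⟨_, isOpen_setOf_forall_abs_inner_lt lam xv (unsaturatedIndices lam xv x),
      fun j hj => (Finset.mem_filter.1 hj).2, ?_⟩
    exact StableSaturationRecovery.of_hasLowerFrameBound hC h fun w hw j hj => (hw j hj).le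

theorem local_stable_recovery_iff_lower_frame_bound
    {n : ℕ} {J : Type*} [Fintype J] (xv : J → EuclideanSpace ℝ (Fin n))
    (hframe : Submodule.span ℝ (Set.range xv) = ⊤)
    (x : EuclideanSpace ℝ (Fin n)) (lam C : ℝ) (hlam : 0 < lam) (hC : 0 < C) :
    (∃ U : Set (EuclideanSpace ℝ (Fin n)), IsOpen U ∧ x ∈ U ∧
        ∀ y ∈ U, ∀ z ∈ U,
          ‖y - z‖ ≤ C * Real.sqrt (∑ j, (satur lam ⟪y, xv j⟫ - satur lam ⟪z, xv j⟫) ^ 2)) ↔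
      ∀ y : EuclideanSpace ℝ (Fin n),
        C⁻¹ ^ 2 * ‖y‖ ^ 2 ≤
          ∑ j ∈ Finset.univ.filter (fun j : J => |⟪x, xv j⟫| < lam), ⟪y, xv j⟫ ^ 2 :=
  local_stable_recovery_iff_lower_frame_bound_general xv x lam C hlam hC
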